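/- Let X be a Banach space, S a closed subset of X, and x₀ ∈ S. The following three conditions on a bounded set D ⊆ X are equivalent: (i) for each ε > 0 there exists δ > 0 such that for each v ∈ D and each x ∈ S ∩ (x₀ + δ·closedBall) there exists λ > 0 (possibly depending on v and x) with S ∩ (x + t(v + ε·closedBall)) nonempty for all t ∈ [0, λ]; (ii) for each ε > 0 there exists δ > 0 such that for each v ∈ D and each x ∈ S ∩ (x₀ + δ·closedBall) there exists a sequence of positive reals tₘ → 0 with S ∩ (x + tₘ(v + ε·closedBall)) nonempty for all m; (iii) for each ε > 0 there exist δ > 0 and λ > 0 such that for all v ∈ D, all x ∈ S ∩ (x₀ + δ·closedBall), and all t ∈ [0, λ], the set S ∩ (x + t(v + ε·closedBall)) is nonempty. -/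

import Mathlib

/-!
(i) ⇒ (ii) and (iii) ⇒ (i) are immediate. For (ii) ⇒ (iii), fix `v ∈ D`, `x ∈ S` near `x₀` and
`t > 0`, and order the pairs `(y, τ)` with `τ ∈ [0, t]` and `y ∈ S ∩ closedBall (x + τ • v) (ε * τ)`
by the Bishop–Phelps cone order `‖y' - y‖ ≤ (‖v‖ + ε) * (τ' - τ)`. Since `S` is closed and `X`
complete, increasing sequences converge in this set, so by the Brezis–Browder principle some pair
admits no successor with larger `τ`. Condition (ii) at `y` gives such a successor unless `τ = t`,
provided `y` lies in the `δ`-ball around `x₀` where (ii) holds; that is ensured uniformly in `v`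
and `x` by starting within `δ / 2` of `x₀` and taking `t ≤ δ / (2 * (M + ε))`, `M` a bound of `D`.
-/

open Metric Filter Set Topology

/-- Brezis–Browder ordering principle. -/
theorem Monotone.exists_ge_forall_ge_eq {α : Type*} [Preorder α] {φ : α → ℝ} (hφ : Monotone φ)
    (hbdd : BddAbove (range φ)) (hchain : ∀ u : ℕ → α, Monotone u → BddAbove (range u))
    (a : α) : ∃ b, a ≤ b ∧ ∀ c, b ≤ c → φ c = φ b := by
  have hσ (p : α) : BddAbove (φ '' Ici p) := hbdd.mono (image_subset_range _ _)
  have step (n : ℕ) (p : α) : ∃ q, p ≤ q ∧ sSup (φ '' Ici p) < φ q + 1 / (n + 1) := by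
    obtain ⟨_, ⟨q, hpq, rfl⟩, hq⟩ := exists_lt_of_lt_csSup (nonempty_Ici.image φ)
      (sub_lt_self (sSup (φ '' Ici p)) (Nat.one_div_pos_of_nat (n := n)))
    exact ⟨q, hpq, by linarith⟩
  choose next hle hlt using step
  let u : ℕ → α := fun n => Nat.rec a next n
  obtain ⟨b, hb⟩ := hchain u (monotone_nat_of_le_succ fun n => hle n (u n))
  refine ⟨b, hb ⟨0, rfl⟩, fun c hbc => le_antisymm ?_ (hφ hbc)⟩
  refine le_of_forall_pos_lt_add fun η hη => ?_
  obtain ⟨n, hn⟩ := exists_nat_one_div_lt hη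
  calc φ c ≤ sSup (φ '' Ici (u n)) := le_csSup (hσ _) ⟨c, (hb ⟨n, rfl⟩).trans hbc, rfl⟩
    _ < φ (u (n + 1)) + 1 / (n + 1) := hlt n (u n)
    _ ≤ φ b + η := add_le_add (hφ (hb ⟨n + 1, rfl⟩)) hn.le

section ConeOrder

variable {E : Type*} [NormedAddCommGroup E]

/-- The Bishop–Phelps cone order of slope `C` on `E × ℝ`. -/
def ConeLE (C : ℝ) (p q : E × ℝ) : Prop := ‖q.1 - p.1‖ ≤ C * (q.2 - p.2)

theorem ConeLE.refl (C : ℝ) (p : E × ℝ) : ConeLE C p p := by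
  simp [ConeLE]

theorem ConeLE.trans {C : ℝ} {p q r : E × ℝ} (hpq : ConeLE C p q) (hqr : ConeLE C q r) :
    ConeLE C p r :=
  calc ‖r.1 - p.1‖ ≤ ‖r.1 - q.1‖ + ‖q.1 - p.1‖ := norm_sub_le_norm_sub_add_norm_sub _ _ _
    _ ≤ C * (r.2 - q.2) + C * (q.2 - p.2) := add_le_add hqr hpq
    _ = C * (r.2 - p.2) := by ring

theorem ConeLE.snd_le {C : ℝ} (hC : 0 < C) {p q : E × ℝ} (h : ConeLE C p q) : p.2 ≤ q.2 :=
  sub_nonneg.1 <| nonneg_of_mul_nonneg_right ((norm_nonneg _).trans h) hC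

abbrev coneOrder (C : ℝ) (K : Set (E × ℝ)) : Preorder K where
  le p q := ConeLE C p.1 q.1
  le_refl p := ConeLE.refl C p.1
  le_trans _ _ _ hpq hqr := hpq.trans hqr

variable [CompleteSpace E] {K : Set (E × ℝ)} {C t : ℝ}

theorem exists_forall_coneLE_of_isClosed (hK : IsClosed K) (hC : 0 < C)
    (hKt : ∀ p ∈ K, p.2 ≤ t) {u : ℕ → E × ℝ} (huK : ∀ n, u n ∈ K)
    (hu : ∀ m n, m ≤ n → ConeLE C (u m) (u n)) : ∃ p ∈ K, ∀ n, ConeLE C (u n) p := by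
  have hτ : Monotone fun n => (u n).2 := fun m n hmn => (hu m n hmn).snd_le hC
  obtain ⟨L, hL⟩ : ∃ L, Tendsto (fun n => (u n).2) atTop (𝓝 L) :=
    ⟨_, tendsto_atTop_ciSup hτ ⟨t, forall_mem_range.2 fun n => hKt _ (huK n)⟩⟩
  have hCL : Tendsto (fun n => C * (L - (u n).2)) atTop (𝓝 0) := by
    simpa using (hL.const_sub L).const_mul C
  have hy : CauchySeq fun n => (u n).1 := by
    refine cauchySeq_of_le_tendsto_0' _ (fun m n hmn => ?_) hCL
    rw [dist_comm, dist_eq_norm]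
    exact le_trans (hu m n hmn) <|
      mul_le_mul_of_nonneg_left (sub_le_sub_right (hτ.ge_of_tendsto hL n) _) hC.le
  obtain ⟨y, hy⟩ := cauchySeq_tendsto_of_complete hy
  refine ⟨(y, L), hK.mem_of_tendsto (hy.prodMk_nhds hL) (Eventually.of_forall huK), fun n => ?_⟩
  exact le_of_tendsto_of_tendsto ((hy.sub_const _).norm) ((hL.sub_const _).const_mul C)
    (eventually_atTop.2 ⟨n, fun m hm => hu n m hm⟩)

theorem exists_snd_eq_of_forall_exists_coneLE (hK : IsClosed K) (hC : 0 < C)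
    (hKt : ∀ p ∈ K, p.2 ≤ t) (hstep : ∀ p ∈ K, p.2 < t → ∃ q ∈ K, p.2 < q.2 ∧ ConeLE C p q)
    (hne : K.Nonempty) : ∃ p ∈ K, p.2 = t := by
  obtain ⟨p₀, hp₀⟩ := hne
  let := coneOrder C K
  have hchain (u : ℕ → K) (hu : Monotone u) : BddAbove (range u) := by
    obtain ⟨p, hpK, hp⟩ := exists_forall_coneLE_of_isClosed hK hC hKt (fun n => (u n).2)
      fun m n hmn => hu hmn
    exact ⟨⟨p, hpK⟩, forall_mem_range.2 hp⟩
  obtain ⟨⟨p, hpK⟩, -, hp⟩ := Monotone.exists_ge_forall_ge_eq (φ := fun p : K => p.1.2)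
    (fun _ _ h => ConeLE.snd_le hC h) ⟨t, forall_mem_range.2 fun p => hKt p p.2⟩ hchain ⟨p₀, hp₀⟩
  refine ⟨p, hpK, (hKt p hpK).eq_of_not_lt fun hlt => ?_⟩
  obtain ⟨q, hqK, hpq, hcone⟩ := hstep p hpK hlt
  exact hpq.ne (hp ⟨q, hqK⟩ hcone).symm

end ConeOrder

section NormedSpace

variable {E : Type*} [NormedAddCommGroup E] [NormedSpace ℝ E] {S : Set E} {x y z v : E}
  {ε τ s t : ℝ}

theorem exists_norm_le_one_add_smul_mem_iff (hε : 0 ≤ ε) (ht : 0 ≤ t) :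
    (∃ b : E, ‖b‖ ≤ 1 ∧ x + t • (v + ε • b) ∈ S) ↔
      (S ∩ closedBall (x + t • v) (ε * t)).Nonempty := by
  have hxt (b : E) : x + t • (v + ε • b) = x + t • v + (ε * t) • b := by
    rw [smul_add, smul_smul, mul_comm, add_assoc]
  simp only [hxt, ← affinity_unitClosedBall (mul_nonneg hε ht), Set.Nonempty, mem_inter_iff,
    mem_vadd_set, mem_smul_set, mem_closedBall_zero_iff, vadd_eq_add]
  constructor
  · rintro ⟨b, hb, hbS⟩
    exact ⟨_, hbS, _, ⟨b, hb, rfl⟩, rfl⟩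
  · rintro ⟨_, hS, _, ⟨b, hb, rfl⟩, rfl⟩
    exact ⟨b, hb, hS⟩

theorem mem_closedBall_add_smul_of_mem_closedBall
    (hy : y ∈ closedBall (x + τ • v) (ε * τ)) (hz : z ∈ closedBall (y + s • v) (ε * s)) :
    z ∈ closedBall (x + (τ + s) • v) (ε * (τ + s)) := by
  rw [mem_closedBall] at *
  calc dist z (x + (τ + s) • v) ≤ dist z (y + s • v) + dist (y + s • v) (x + (τ + s) • v) :=
        dist_triangle _ _ _
    _ = dist z (y + s • v) + dist y (x + τ • v) := by rw [add_smul, ← add_assoc, dist_add_right]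
    _ ≤ ε * (τ + s) := by linarith

theorem coneLE_of_mem_closedBall_add_smul (hs : 0 ≤ s) (hz : z ∈ closedBall (y + s • v) (ε * s)) :
    ConeLE (‖v‖ + ε) (y, τ) (z, τ + s) := by
  rw [mem_closedBall_iff_norm] at hz
  calc ‖z - y‖ ≤ ‖z - (y + s • v)‖ + ‖y + s • v - y‖ := norm_sub_le_norm_sub_add_norm_sub _ _ _
    _ = ‖z - (y + s • v)‖ + s * ‖v‖ := by rw [add_sub_cancel_left, norm_smul_of_nonneg hs]
    _ ≤ ε * s + s * ‖v‖ := by gcongr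
    _ = (‖v‖ + ε) * (τ + s - τ) := by ring

theorem nonempty_inter_closedBall_of_frequently [CompleteSpace E] (hS : IsClosed S) (hε : 0 < ε)
    (ht : 0 ≤ t) (hx : x ∈ S)
    (h : ∀ τ ∈ Ico 0 t, ∀ y ∈ S ∩ closedBall (x + τ • v) (ε * τ),
      ∃ᶠ s in 𝓝[>] 0, (S ∩ closedBall (y + s • v) (ε * s)).Nonempty) :
    (S ∩ closedBall (x + t • v) (ε * t)).Nonempty := by
  set K : Set (E × ℝ) := {p | p.1 ∈ S ∩ closedBall (x + p.2 • v) (ε * p.2) ∧ p.2 ∈ Icc 0 t}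
  have hK : IsClosed K := by
    refine ((hS.preimage continuous_fst).inter (isClosed_le ?_ ?_)).inter
      (isClosed_Icc.preimage continuous_snd) <;> fun_prop
  have hstep : ∀ p ∈ K, p.2 < t → ∃ q ∈ K, p.2 < q.2 ∧ ConeLE (‖v‖ + ε) p q := by
    rintro ⟨y, τ⟩ ⟨hy, hτ, -⟩ (hτt : τ < t)
    obtain ⟨s, ⟨z, hz⟩, hs, hst⟩ :=
      ((h τ ⟨hτ, hτt⟩ y hy).and_eventually (Ioo_mem_nhdsGT (sub_pos.2 hτt))).exists
    have hzK : (z, τ + s) ∈ K :=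
      ⟨⟨hz.1, mem_closedBall_add_smul_of_mem_closedBall hy.2 hz.2⟩, by positivity,
        show τ + s ≤ t by linarith⟩
    exact ⟨_, hzK, lt_add_of_pos_right τ hs, coneLE_of_mem_closedBall_add_smul hs.le hz.2⟩
  obtain ⟨p, ⟨hpS, -⟩, hpt⟩ := exists_snd_eq_of_forall_exists_coneLE hK (by positivity)
    (fun p hp => hp.2.2) hstep ⟨(x, 0), by simp [K, hx, ht]⟩
  exact ⟨p.1, hpt ▸ hpS⟩

end NormedSpace

theorem frequently_nhdsWithin_iff_exists_seq {α : Type*} [TopologicalSpace α] {a : α} {s : Set α}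
    [(𝓝 a).IsCountablyGenerated] {p : α → Prop} :
    (∃ᶠ x in 𝓝[s] a, p x) ↔ ∃ u : ℕ → α, (∀ n, u n ∈ s) ∧ Tendsto u atTop (𝓝 a) ∧ ∀ n, p (u n) := by
  constructor
  · intro h
    obtain ⟨u, hu, hup⟩ := frequently_iff_seq_forall.1 (h.and_eventually self_mem_nhdsWithin)
    exact ⟨u, fun n => (hup n).2, tendsto_nhdsWithin_iff.1 hu |>.1, fun n => (hup n).1⟩
  · rintro ⟨u, hus, hu, hup⟩
    exact (tendsto_nhdsWithin_iff.2 ⟨hu, Eventually.of_forall hus⟩).frequently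
      (Frequently.of_forall hup)

section UniformTangentSet

variable {X : Type*} [NormedAddCommGroup X] [NormedSpace ℝ X] {S D : Set X} {x₀ : X}

/-- Condition (i). -/
def IsUniformTangentSet (S : Set X) (x₀ : X) (D : Set X) : Prop :=
  ∀ ε > (0:ℝ), ∃ δ > (0:ℝ), ∀ v ∈ D, ∀ x ∈ S, ‖x - x₀‖ ≤ δ →
    ∃ lam > (0:ℝ), ∀ t ∈ Set.Icc (0:ℝ) lam, ∃ b : X, ‖b‖ ≤ 1 ∧ x + t • (v + ε • b) ∈ S

/-- Condition (ii). -/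
def IsSeqUniformTangentSet (S : Set X) (x₀ : X) (D : Set X) : Prop :=
  ∀ ε > (0:ℝ), ∃ δ > (0:ℝ), ∀ v ∈ D, ∀ x ∈ S, ‖x - x₀‖ ≤ δ →
    ∃ t : ℕ → ℝ, (∀ m, 0 < t m) ∧ Tendsto t atTop (nhds 0) ∧
      ∀ m, ∃ b : X, ‖b‖ ≤ 1 ∧ x + t m • (v + ε • b) ∈ S

/-- Condition (iii). -/
def IsTimeUniformTangentSet (S : Set X) (x₀ : X) (D : Set X) : Prop :=
  ∀ ε > (0:ℝ), ∃ δ > (0:ℝ), ∃ lam > (0:ℝ), ∀ v ∈ D, ∀ x ∈ S, ‖x - x₀‖ ≤ δ →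
    ∀ t ∈ Set.Icc (0:ℝ) lam, ∃ b : X, ‖b‖ ≤ 1 ∧ x + t • (v + ε • b) ∈ S

theorem IsTimeUniformTangentSet.isUniformTangentSet (h : IsTimeUniformTangentSet S x₀ D) :
    IsUniformTangentSet S x₀ D := fun ε hε =>
  let ⟨δ, hδ, lam, hlam, hS⟩ := h ε hε
  ⟨δ, hδ, fun v hv x hx hxδ => ⟨lam, hlam, hS v hv x hx hxδ⟩⟩

theorem IsUniformTangentSet.isSeqUniformTangentSet (h : IsUniformTangentSet S x₀ D) :
    IsSeqUniformTangentSet S x₀ D := by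
  intro ε hε
  obtain ⟨δ, hδ, hS⟩ := h ε hε
  refine ⟨δ, hδ, fun v hv x hx hxδ => ?_⟩
  obtain ⟨lam, hlam, hxS⟩ := hS v hv x hx hxδ
  have hfreq : ∃ᶠ t in 𝓝[>] (0 : ℝ), ∃ b : X, ‖b‖ ≤ 1 ∧ x + t • (v + ε • b) ∈ S :=
    Eventually.frequently <| mem_of_superset (Ioc_mem_nhdsGT hlam) fun t ht => hxS t
      (Ioc_subset_Icc_self ht)
  obtain ⟨t, ht_pos, ht_lim, htS⟩ := frequently_nhdsWithin_iff_exists_seq.1 hfreq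
  exact ⟨t, ht_pos, ht_lim, htS⟩

theorem IsSeqUniformTangentSet.isTimeUniformTangentSet [CompleteSpace X]
    (h : IsSeqUniformTangentSet S x₀ D) (hS : IsClosed S) (hD : Bornology.IsBounded D) :
    IsTimeUniformTangentSet S x₀ D := by
  intro ε hε
  obtain ⟨M, hM, hDM⟩ := hD.exists_pos_norm_le
  obtain ⟨δ, hδ, hδS⟩ := h ε hε
  refine ⟨δ / 2, by positivity, δ / (2 * (M + ε)), by positivity, fun v hv x hx hxδ t ht => ?_⟩
  rw [exists_norm_le_one_add_smul_mem_iff hε.le ht.1]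
  refine nonempty_inter_closedBall_of_frequently hS hε ht.1 hx fun τ hτ y hy => ?_
  have hτδ : τ * (2 * (M + ε)) ≤ δ := (le_div_iff₀ (by positivity)).1 (hτ.2.le.trans ht.2)
  have hyδ : ‖y - x₀‖ ≤ δ :=
    calc ‖y - x₀‖ = ‖(y - (x + τ • v)) + τ • v + (x - x₀)‖ := by congr 1; abel
      _ ≤ ‖y - (x + τ • v)‖ + ‖τ • v‖ + ‖x - x₀‖ := norm_add₃_le
      _ ≤ ε * τ + τ * M + δ / 2 := by
        rw [norm_smul_of_nonneg hτ.1]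
        gcongr
        exacts [mem_closedBall_iff_norm.1 hy.2, hτ.1, hDM v hv]
      _ ≤ δ := by linarith
  obtain ⟨s, hs_pos, hs_lim, hsS⟩ := hδS v hv y hy.1 hyδ
  exact (frequently_nhdsWithin_iff_exists_seq.2 ⟨s, hs_pos, hs_lim, hsS⟩).and_eventually
    self_mem_nhdsWithin |>.mono fun s ⟨hsS, hs⟩ =>
      (exists_norm_le_one_add_smul_mem_iff hε.le (le_of_lt hs)).1 hsS

end UniformTangentSet

theorem uts_three_equivalent_characterizations_general
    {X : Type*} [NormedAddCommGroup X] [NormedSpace ℝ X] [CompleteSpace X]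
    (S : Set X) (hS : IsClosed S) (x₀ : X)
    (D : Set X) (hD : Bornology.IsBounded D) :
    ((∀ ε > (0:ℝ), ∃ δ > (0:ℝ), ∀ v ∈ D, ∀ x ∈ S, ‖x - x₀‖ ≤ δ →
        ∃ lam > (0:ℝ), ∀ t ∈ Set.Icc (0:ℝ) lam,
          ∃ b : X, ‖b‖ ≤ 1 ∧ x + t • (v + ε • b) ∈ S) ↔
      (∀ ε > (0:ℝ), ∃ δ > (0:ℝ), ∀ v ∈ D, ∀ x ∈ S, ‖x - x₀‖ ≤ δ →
        ∃ t : ℕ → ℝ, (∀ m, 0 < t m) ∧ Tendsto t atTop (nhds 0) ∧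
          ∀ m, ∃ b : X, ‖b‖ ≤ 1 ∧ x + t m • (v + ε • b) ∈ S)) ∧
    ((∀ ε > (0:ℝ), ∃ δ > (0:ℝ), ∀ v ∈ D, ∀ x ∈ S, ‖x - x₀‖ ≤ δ →
        ∃ t : ℕ → ℝ, (∀ m, 0 < t m) ∧ Tendsto t atTop (nhds 0) ∧
          ∀ m, ∃ b : X, ‖b‖ ≤ 1 ∧ x + t m • (v + ε • b) ∈ S) ↔
      (∀ ε > (0:ℝ), ∃ δ > (0:ℝ), ∃ lam > (0:ℝ), ∀ v ∈ D, ∀ x ∈ S, ‖x - x₀‖ ≤ δ →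
        ∀ t ∈ Set.Icc (0:ℝ) lam,
          ∃ b : X, ‖b‖ ≤ 1 ∧ x + t • (v + ε • b) ∈ S)) := by
  have i_ii : IsUniformTangentSet S x₀ D → IsSeqUniformTangentSet S x₀ D :=
    IsUniformTangentSet.isSeqUniformTangentSet
  have ii_iii : IsSeqUniformTangentSet S x₀ D → IsTimeUniformTangentSet S x₀ D :=
    fun h => h.isTimeUniformTangentSet hS hD
  have iii_i : IsTimeUniformTangentSet S x₀ D → IsUniformTangentSet S x₀ D :=
    IsTimeUniformTangentSet.isUniformTangentSet
  exact ⟨⟨i_ii, iii_i ∘ ii_iii⟩, ⟨ii_iii, i_ii ∘ iii_i⟩⟩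

/-- Equivalence of the three characterizations of uniform tangent sets. -/
theorem uts_three_equivalent_characterizations
    {X : Type*} [NormedAddCommGroup X] [NormedSpace ℝ X] [CompleteSpace X]
    (S : Set X) (hS : IsClosed S) (x₀ : X) (hx₀ : x₀ ∈ S)
    (D : Set X) (hD : Bornology.IsBounded D) :
    ((∀ ε > (0:ℝ), ∃ δ > (0:ℝ), ∀ v ∈ D, ∀ x ∈ S, ‖x - x₀‖ ≤ δ →
        ∃ lam > (0:ℝ), ∀ t ∈ Set.Icc (0:ℝ) lam,
          ∃ b : X, ‖b‖ ≤ 1 ∧ x + t • (v + ε • b) ∈ S) ↔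
      (∀ ε > (0:ℝ), ∃ δ > (0:ℝ), ∀ v ∈ D, ∀ x ∈ S, ‖x - x₀‖ ≤ δ →
        ∃ t : ℕ → ℝ, (∀ m, 0 < t m) ∧ Tendsto t atTop (nhds 0) ∧
          ∀ m, ∃ b : X, ‖b‖ ≤ 1 ∧ x + t m • (v + ε • b) ∈ S)) ∧
    ((∀ ε > (0:ℝ), ∃ δ > (0:ℝ), ∀ v ∈ D, ∀ x ∈ S, ‖x - x₀‖ ≤ δ →
        ∃ t : ℕ → ℝ, (∀ m, 0 < t m) ∧ Tendsto t atTop (nhds 0) ∧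
          ∀ m, ∃ b : X, ‖b‖ ≤ 1 ∧ x + t m • (v + ε • b) ∈ S) ↔
      (∀ ε > (0:ℝ), ∃ δ > (0:ℝ), ∃ lam > (0:ℝ), ∀ v ∈ D, ∀ x ∈ S, ‖x - x₀‖ ≤ δ →
        ∀ t ∈ Set.Icc (0:ℝ) lam,
          ∃ b : X, ‖b‖ ≤ 1 ∧ x + t • (v + ε • b) ∈ S)) :=
  uts_three_equivalent_characterizations_general S hS x₀ D hD
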